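/- (Elastic duality) For λ > 0, strictly positive prior b ∈ Δ^N, and the primal problem min over w ∈ Δ^N of KL(w‖b) + (λ/2)‖Xᵀw − t‖², the unique primal optimizer is the exponential tilt w_i ∝ b_i e^{θ*ᵀx_i}, where θ* is the unique maximizer of L_el(θ) = θᵀt − log ∑_i b_i e^{θᵀx_i} − ‖θ‖²/(2λ); moreover θ* satisfies θ* = λ(t − Xᵀw(θ*)). -/

import Mathlib

open Finset
open scoped RealInnerProductSpace

/-! For `w` in the simplex and any `θ`,
  `F w - L_el θ = KL(w ‖ w(θ)) + ‖θ + λ (Xᵀw - t)‖² / (2λ)`,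
where `w(θ)` is the exponential tilt of `b`. Both terms are nonnegative (Gibbs' inequality), so
`L_el ≤ F` on the simplex, with equality exactly when `w = w(θ)` and `θ = λ (t - Xᵀw)`.
`L_el` is continuous and tends to `-∞` at infinity, so it has a maximizer `θ*`, where stationarity
is the fixed-point equation `θ* = λ (t - Xᵀw(θ*))`. Hence `F (w(θ*)) = L_el θ*`, and the equality
case yields both uniqueness statements. -/

open Real InformationTheory Filter

variable {ι E : Type*} [Fintype ι] [NormedAddCommGroup E] [InnerProductSpace ℝ E]

section Gibbs

variable {w p : ι → ℝ}

theorem sum_mul_log_div_eq_sum_mul_klFun (hp : ∀ i, 0 < p i) (hs : ∑ i, w i = ∑ i, p i) :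
    ∑ i, w i * log (w i / p i) = ∑ i, p i * klFun (w i / p i) := by
  have hterm : ∀ i, p i * klFun (w i / p i) = w i * log (w i / p i) + (p i - w i) := by
    intro i
    rw [klFun_apply]
    field_simp [(hp i).ne']
    ring
  simp only [hterm, sum_add_distrib, sum_sub_distrib, hs, sub_self, add_zero]

theorem sum_mul_log_div_nonneg (hw : ∀ i, 0 ≤ w i) (hp : ∀ i, 0 < p i)
    (hs : ∑ i, w i = ∑ i, p i) : 0 ≤ ∑ i, w i * log (w i / p i) := by
  rw [sum_mul_log_div_eq_sum_mul_klFun hp hs]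
  exact sum_nonneg fun i _ => mul_nonneg (hp i).le (klFun_nonneg (div_nonneg (hw i) (hp i).le))

theorem eq_of_sum_mul_log_div_eq_zero (hw : ∀ i, 0 ≤ w i) (hp : ∀ i, 0 < p i)
    (hs : ∑ i, w i = ∑ i, p i) (h : ∑ i, w i * log (w i / p i) = 0) : w = p := by
  have hkl : ∀ i, 0 ≤ klFun (w i / p i) := fun i => klFun_nonneg (div_nonneg (hw i) (hp i).le)
  rw [sum_mul_log_div_eq_sum_mul_klFun hp hs,
    sum_eq_zero_iff_of_nonneg fun i _ => mul_nonneg (hp i).le (hkl i)] at h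
  funext i
  have := (mul_eq_zero.1 (h i (mem_univ i))).resolve_left (hp i).ne'
  rwa [klFun_eq_zero_iff (div_nonneg (hw i) (hp i).le), div_eq_one_iff_eq (hp i).ne'] at this

end Gibbs

section Elastic

variable (b : ι → ℝ) (x : ι → E) (t : E) (lam : ℝ)

noncomputable def expTilt (θ : E) : ι → ℝ :=
  fun i => b i * exp ⟪θ, x i⟫ / ∑ j, b j * exp ⟪θ, x j⟫

noncomputable def elasticDual (θ : E) : ℝ :=
  ⟪θ, t⟫ - log (∑ i, b i * exp ⟪θ, x i⟫) - ‖θ‖ ^ 2 / (2 * lam)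

noncomputable def elasticPrimal (w : ι → ℝ) : ℝ :=
  (∑ i, w i * log (w i / b i)) + lam / 2 * ‖(∑ i, w i • x i) - t‖ ^ 2

variable {b x t lam}

theorem sum_mul_exp_inner_pos [Nonempty ι] (hb : ∀ i, 0 < b i) (θ : E) :
    0 < ∑ i, b i * exp ⟪θ, x i⟫ :=
  sum_pos (fun i _ => mul_pos (hb i) (exp_pos _)) univ_nonempty

theorem expTilt_pos [Nonempty ι] (hb : ∀ i, 0 < b i) (θ : E) (i : ι) : 0 < expTilt b x θ i :=
  div_pos (mul_pos (hb i) (exp_pos _)) (sum_mul_exp_inner_pos hb θ)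

theorem sum_expTilt [Nonempty ι] (hb : ∀ i, 0 < b i) (θ : E) : ∑ i, expTilt b x θ i = 1 := by
  simp only [expTilt]
  rw [← sum_div, div_self (sum_mul_exp_inner_pos hb θ).ne']

theorem expTilt_mem_stdSimplex [Nonempty ι] (hb : ∀ i, 0 < b i) (θ : E) :
    expTilt b x θ ∈ stdSimplex ℝ ι :=
  ⟨fun i => (expTilt_pos hb θ i).le, sum_expTilt hb θ⟩

theorem elasticPrimal_sub_elasticDual [Nonempty ι] (hb : ∀ i, 0 < b i) (hlam : lam ≠ 0)
    {w : ι → ℝ} (hw : w ∈ stdSimplex ℝ ι) (θ : E) :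
    elasticPrimal b x t lam w - elasticDual b x t lam θ =
      (∑ i, w i * log (w i / expTilt b x θ i)) +
        ‖θ + lam • ((∑ i, w i • x i) - t)‖ ^ 2 / (2 * lam) := by
  set Z := ∑ j, b j * exp ⟪θ, x j⟫
  have hZ : 0 < Z := sum_mul_exp_inner_pos hb θ
  have hterm : ∀ i, w i * log (w i / expTilt b x θ i) =
      w i * log (w i / b i) - w i * ⟪θ, x i⟫ + w i * log Z := by
    intro i
    rcases (hw.1 i).eq_or_lt with hwi | hwi
    · simp [← hwi]
    · have hwb : 0 < w i / b i := div_pos hwi (hb i)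
      have : w i / expTilt b x θ i = w i / b i / exp ⟪θ, x i⟫ * Z := by
        rw [show expTilt b x θ i = b i * exp ⟪θ, x i⟫ / Z from rfl]
        field_simp [(hb i).ne']
      rw [this, log_mul (div_pos hwb (exp_pos _)).ne' hZ.ne', log_div hwb.ne' (exp_pos _).ne',
        log_exp]
      ring
  have hKL : ∑ i, w i * log (w i / expTilt b x θ i) =
      (∑ i, w i * log (w i / b i)) - ⟪θ, ∑ i, w i • x i⟫ + log Z := by
    simp only [hterm, sum_add_distrib, sum_sub_distrib, ← sum_mul, hw.2, inner_sum,
      real_inner_smul_right, one_mul]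
  have hsq : ‖θ + lam • ((∑ i, w i • x i) - t)‖ ^ 2 = ‖θ‖ ^ 2 +
      2 * lam * (⟪θ, ∑ i, w i • x i⟫ - ⟪θ, t⟫) + lam ^ 2 * ‖(∑ i, w i • x i) - t‖ ^ 2 := by
    rw [norm_add_sq_real, real_inner_smul_right, inner_sub_right, norm_smul, mul_pow,
      Real.norm_eq_abs, sq_abs]
    ring
  rw [hKL, hsq, elasticPrimal, elasticDual]
  field_simp
  ring

theorem elasticDual_le_elasticPrimal [Nonempty ι] (hb : ∀ i, 0 < b i) (hlam : 0 < lam)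
    {w : ι → ℝ} (hw : w ∈ stdSimplex ℝ ι) (θ : E) :
    elasticDual b x t lam θ ≤ elasticPrimal b x t lam w := by
  have hgap := elasticPrimal_sub_elasticDual (x := x) (t := t) hb hlam.ne' hw θ
  have hKL := sum_mul_log_div_nonneg hw.1 (expTilt_pos (x := x) hb θ)
    (by rw [hw.2, sum_expTilt hb θ])
  have hsq : 0 ≤ ‖θ + lam • ((∑ i, w i • x i) - t)‖ ^ 2 / (2 * lam) := by positivity
  linarith

theorem elasticPrimal_eq_elasticDual_iff [Nonempty ι] (hb : ∀ i, 0 < b i) (hlam : 0 < lam)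
    {w : ι → ℝ} (hw : w ∈ stdSimplex ℝ ι) (θ : E) :
    elasticPrimal b x t lam w = elasticDual b x t lam θ ↔
      w = expTilt b x θ ∧ θ = lam • (t - ∑ i, w i • x i) := by
  have hKL := sum_mul_log_div_nonneg hw.1 (expTilt_pos (x := x) hb θ)
    (by rw [hw.2, sum_expTilt hb θ])
  have hsq : 0 ≤ ‖θ + lam • ((∑ i, w i • x i) - t)‖ ^ 2 / (2 * lam) := by positivity
  rw [← sub_eq_zero, elasticPrimal_sub_elasticDual hb hlam.ne' hw θ,
    add_eq_zero_iff_of_nonneg hKL hsq, div_eq_zero_iff, or_iff_left (by positivity),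
    sq_eq_zero_iff, norm_eq_zero, add_eq_zero_iff_eq_neg, ← smul_neg, neg_sub]
  refine and_congr_left fun _ => ⟨eq_of_sum_mul_log_div_eq_zero hw.1 (expTilt_pos hb θ)
    (by rw [hw.2, sum_expTilt hb θ]), fun h => ?_⟩
  subst h
  exact sum_eq_zero fun i _ => by rw [div_self (expTilt_pos hb θ i).ne', log_one, mul_zero]

theorem log_add_inner_le_log_sum_mul_exp (hb : ∀ i, 0 < b i) (θ : E) (i : ι) :
    log (b i) + ⟪θ, x i⟫ ≤ log (∑ j, b j * exp ⟪θ, x j⟫) := by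
  have hpos : 0 < b i * exp ⟪θ, x i⟫ := mul_pos (hb i) (exp_pos _)
  rw [← log_exp ⟪θ, x i⟫, ← log_mul (hb i).ne' (exp_pos _).ne']
  exact log_le_log hpos (single_le_sum (f := fun j => b j * exp ⟪θ, x j⟫)
    (fun j _ => (mul_pos (hb j) (exp_pos _)).le) (mem_univ i))

theorem elasticDual_le_sub_norm_sq (hb : ∀ i, 0 < b i) (hlam : 0 < lam) (θ : E) (i : ι) :
    elasticDual b x t lam θ ≤ -log (b i) + lam * ‖t - x i‖ ^ 2 - ‖θ‖ ^ 2 / (4 * lam) := by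
  have hlog := log_add_inner_le_log_sum_mul_exp (x := x) hb θ i
  have hyoung : ⟪θ, t - x i⟫ ≤ lam * ‖t - x i‖ ^ 2 + ‖θ‖ ^ 2 / (4 * lam) := by
    have hsq : 0 ≤ (2 * lam * ‖t - x i‖ - ‖θ‖) ^ 2 / (4 * lam) := by positivity
    have hexp : (2 * lam * ‖t - x i‖ - ‖θ‖) ^ 2 / (4 * lam) =
        lam * ‖t - x i‖ ^ 2 + ‖θ‖ ^ 2 / (4 * lam) - ‖θ‖ * ‖t - x i‖ := by
      field_simp
      ring
    linarith [real_inner_le_norm θ (t - x i)]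
  rw [inner_sub_right] at hyoung
  have hquarter : ‖θ‖ ^ 2 / (2 * lam) = ‖θ‖ ^ 2 / (4 * lam) + ‖θ‖ ^ 2 / (4 * lam) := by
    field_simp
    ring
  rw [elasticDual]
  linarith

theorem tendsto_elasticDual_cocompact [Nonempty ι] [ProperSpace E] (hb : ∀ i, 0 < b i)
    (hlam : 0 < lam) : Tendsto (elasticDual b x t lam) (cocompact E) atBot := by
  obtain ⟨i⟩ := ‹Nonempty ι›
  refine tendsto_atBot_mono (fun θ => elasticDual_le_sub_norm_sq hb hlam θ i) ?_
  have hquad : Tendsto (fun θ : E => ‖θ‖ ^ 2 / (4 * lam)) (cocompact E) atTop :=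
    ((tendsto_pow_atTop two_ne_zero).comp tendsto_norm_cocompact_atTop).atTop_div_const
      (by positivity)
  simp only [sub_eq_add_neg _ (_ / _)]
  exact tendsto_atBot_add_const_left _ _ (tendsto_neg_atTop_atBot.comp hquad)

theorem continuous_elasticDual [Nonempty ι] (hb : ∀ i, 0 < b i) :
    Continuous (elasticDual b x t lam) := by
  unfold elasticDual
  fun_prop (disch := exact fun θ => (sum_mul_exp_inner_pos hb θ).ne')

theorem exists_isMaxOn_elasticDual [Nonempty ι] [ProperSpace E] (hb : ∀ i, 0 < b i)
    (hlam : 0 < lam) : ∃ θ, IsMaxOn (elasticDual b x t lam) Set.univ θ := by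
  obtain ⟨θ, hθ⟩ := (continuous_elasticDual hb).exists_forall_ge
    (tendsto_elasticDual_cocompact (x := x) (t := t) hb hlam)
  exact ⟨θ, fun θ' _ => hθ θ'⟩

theorem hasFDerivAt_inner_const_right (y θ : E) :
    HasFDerivAt (fun θ : E => ⟪θ, y⟫) (innerSL ℝ y) θ := by
  convert (innerSL ℝ y).hasFDerivAt using 1
  funext v
  rw [innerSL_apply_apply, real_inner_comm]

theorem hasFDerivAt_log_sum_mul_exp_inner [Nonempty ι] (hb : ∀ i, 0 < b i) (θ : E) :
    HasFDerivAt (fun θ => log (∑ i, b i * exp ⟪θ, x i⟫))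
      (innerSL ℝ (∑ i, expTilt b x θ i • x i)) θ := by
  have hderiv := (HasFDerivAt.fun_sum fun i _ =>
    ((hasFDerivAt_inner_const_right (x i) θ).exp).const_mul (b i)).log
      (sum_mul_exp_inner_pos hb θ).ne'
  convert hderiv using 1
  ext v
  simp only [expTilt, map_sum, map_smul, _root_.sum_apply, smul_apply, coe_innerSL_apply,
    smul_eq_mul]
  rw [mul_sum]
  exact sum_congr rfl fun i _ => by ring

theorem hasFDerivAt_elasticDual [Nonempty ι] (hb : ∀ i, 0 < b i) (θ : E) :
    HasFDerivAt (elasticDual b x t lam)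
      (innerSL ℝ (t - ∑ i, expTilt b x θ i • x i - lam⁻¹ • θ)) θ := by
  have hderiv := ((hasFDerivAt_inner_const_right t θ).sub
    (hasFDerivAt_log_sum_mul_exp_inner (x := x) hb θ)).sub
    ((hasStrictFDerivAt_norm_sq θ).hasFDerivAt.mul_const (2 * lam)⁻¹)
  refine (hderiv.congr_fderiv ?_).congr_of_eventuallyEq (.of_forall fun θ => ?_)
  · ext v
    simp only [map_sub, map_smul, sub_apply, smul_apply, coe_innerSL_apply, smul_eq_mul,
      nsmul_eq_mul]
    push_cast
    ring
  · simp [elasticDual, div_eq_mul_inv]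

theorem eq_smul_of_isMaxOn_elasticDual [Nonempty ι] (hb : ∀ i, 0 < b i) (hlam : 0 < lam) {θ : E}
    (hθ : IsMaxOn (elasticDual b x t lam) Set.univ θ) :
    θ = lam • (t - ∑ i, expTilt b x θ i • x i) := by
  have hcrit :=
    (hθ.isLocalMax univ_mem).hasFDerivAt_eq_zero (hasFDerivAt_elasticDual hb θ)
  rw [← map_zero (innerSL ℝ), innerSL_inj, sub_eq_zero] at hcrit
  rw [hcrit, smul_smul, mul_inv_cancel₀ hlam.ne', one_smul]

end Elastic

theorem elastic_duality
    {N K : ℕ} (b : Fin N → ℝ) (hb : ∀ i, 0 < b i) (hbsimplex : b ∈ stdSimplex ℝ (Fin N))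
    (x : Fin N → EuclideanSpace ℝ (Fin K)) (t : EuclideanSpace ℝ (Fin K))
    (lam : ℝ) (hlam : 0 < lam) :
    let Lel : EuclideanSpace ℝ (Fin K) → ℝ :=
      fun θ => ⟪θ, t⟫ - Real.log (∑ i, b i * Real.exp ⟪θ, x i⟫) -
        ‖θ‖ ^ 2 / (2 * lam)
    let tilt : EuclideanSpace ℝ (Fin K) → Fin N → ℝ :=
      fun θ i => b i * Real.exp ⟪θ, x i⟫ / ∑ j, b j * Real.exp ⟪θ, x j⟫
    let F : (Fin N → ℝ) → ℝ :=
      fun w => (∑ i, w i * Real.log (w i / b i)) +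
        lam / 2 * ‖(∑ i, w i • x i) - t‖ ^ 2
    ∃ θstar : EuclideanSpace ℝ (Fin K),
      IsMaxOn Lel Set.univ θstar ∧
      (∀ θ', IsMaxOn Lel Set.univ θ' → θ' = θstar) ∧
      tilt θstar ∈ stdSimplex ℝ (Fin N) ∧
      IsMinOn F (stdSimplex ℝ (Fin N)) (tilt θstar) ∧
      (∀ w ∈ stdSimplex ℝ (Fin N), F w = F (tilt θstar) → w = tilt θstar) ∧
      θstar = lam • (t - ∑ i, tilt θstar i • x i) := by
  intro Lel tilt F
  obtain ⟨i, -, -⟩ := exists_ne_zero_of_sum_ne_zero (hbsimplex.2.symm ▸ one_ne_zero)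
  have : Nonempty (Fin N) := ⟨i⟩
  obtain ⟨θ, hmax⟩ := exists_isMaxOn_elasticDual (x := x) (t := t) hb hlam
  have hfix := eq_smul_of_isMaxOn_elasticDual hb hlam hmax
  have hmem := expTilt_mem_stdSimplex (x := x) hb θ
  have hstrong : elasticPrimal b x t lam (expTilt b x θ) = elasticDual b x t lam θ :=
    (elasticPrimal_eq_elasticDual_iff hb hlam hmem θ).2 ⟨rfl, hfix⟩
  refine ⟨θ, hmax, fun θ' hθ' => ?_, hmem, fun w hw => ?_, fun w hw hFw => ?_, hfix⟩
  · have hval := hstrong.trans (le_antisymm (hθ' trivial) (hmax trivial))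
    rw [hfix]
    exact ((elasticPrimal_eq_elasticDual_iff hb hlam hmem θ').1 hval).2
  · exact hstrong.trans_le (elasticDual_le_elasticPrimal hb hlam hw θ)
  · exact ((elasticPrimal_eq_elasticDual_iff hb hlam hw θ).1 (hFw.trans hstrong)).1
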